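/- arXiv:1112.0280 — 2 statements merged into one kernel-verified Lean document; each statement's English description precedes it below -/
import Mathlib

section
/- Let E = ℝ³ with the Euclidean inner product and L(b₁, b₂, b₃) = (b₂, b₁, b₃). Then the helix {(cos θ, sin θ, θ) : θ ∈ ℝ} is an L-positive subset of ℝ³, but for 0 < λ < 1 the helix {(cos θ, sin θ, λθ) : θ ∈ ℝ} is not L-positive. -/
/-- The quadratic form `q_L(b) = (1/2)⟨b, Lb⟩ = b₁ b₂ + (1/2) b₃²` associated with
the SNL map `L(b₁,b₂,b₃) = (b₂,b₁,b₃)` on Euclidean `ℝ³`. -/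
noncomputable def qHelix (b : ℝ × ℝ × ℝ) : ℝ := b.1 * b.2.1 + (1 / 2) * b.2.2 ^ 2

/-- A nonempty subset `A` of `ℝ³` is `L`-positive when `q_L(b - c) ≥ 0` for all `b, c ∈ A`. -/
def LPositiveHelix (A : Set (ℝ × ℝ × ℝ)) : Prop :=
  A.Nonempty ∧ ∀ b ∈ A, ∀ c ∈ A, 0 ≤ qHelix (b - c)

/-!
Write two points of the helix `θ ↦ (cos θ, sin θ, c θ)` as `θ = s ± d`. The sum-to-product
formulas give `q_L(γ(s + d) - γ(s - d)) = 2 (c² d² - sin (2s) sin² d)`. Since `sin² d ≤ d²`, this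
is nonnegative for every `s, d` when `c² ≥ 1`. When `c² < 1`, take `s = π/4` and a small `d > 0`
with `|c| d < sin d`, which exists because `sin d / d → 1`; then the value is negative.
-/

open Real Set

noncomputable def helix (c θ : ℝ) : ℝ × ℝ × ℝ := (cos θ, sin θ, c * θ)

lemma qHelix_helix_sub (c s d : ℝ) :
    qHelix (helix c (s + d) - helix c (s - d)) = 2 * ((c * d) ^ 2 - sin (2 * s) * sin d ^ 2) := by
  simp only [qHelix, helix, Prod.mk_sub_mk, cos_add, cos_sub, sin_add, sin_sub, sin_two_mul]
  ring

lemma exists_pos_mul_lt_sin {c : ℝ} (hc : c < 1) : ∃ t, 0 < t ∧ c * t < sin t := by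
  set t := min 1 (1 - c)
  have ht : 0 < t := lt_min one_pos (sub_pos.2 hc)
  have ht_sq : t ^ 2 ≤ 1 - c := by
    nlinarith [min_le_left 1 (1 - c), min_le_right 1 (1 - c)]
  refine ⟨t, ht, lt_of_le_of_lt ?_ (sin_gt_sub_cube ht)⟩
  nlinarith

lemma lPositiveHelix_range_helix_iff (c : ℝ) :
    LPositiveHelix (range (helix c)) ↔ 1 ≤ c ^ 2 := by
  refine ⟨fun ⟨_, hpos⟩ => ?_, fun hc => ⟨range_nonempty _, ?_⟩⟩
  · by_contra! hc
    obtain ⟨t, ht, hsin⟩ := exists_pos_mul_lt_sin ((sq_lt_one_iff_abs_lt_one c).1 hc)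
    have hq := hpos _ ⟨π / 4 + t, rfl⟩ _ ⟨π / 4 - t, rfl⟩
    rw [qHelix_helix_sub, show 2 * (π / 4) = π / 2 by ring, sin_pi_div_two] at hq
    have : (c * t) ^ 2 < sin t ^ 2 := by
      rw [← sq_abs (c * t), abs_mul, abs_of_pos ht]
      exact pow_lt_pow_left₀ hsin (by positivity) two_ne_zero
    linarith
  · rintro _ ⟨θ, rfl⟩ _ ⟨φ, rfl⟩
    obtain ⟨s, d, rfl, rfl⟩ : ∃ s d, θ = s + d ∧ φ = s - d :=
      ⟨(θ + φ) / 2, (θ - φ) / 2, by ring, by ring⟩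
    rw [qHelix_helix_sub]
    nlinarith [sin_sq_le_sq (x := d), sin_le_one (2 * s), sq_nonneg (sin d)]

lemma setOf_exists_eq_helix (c : ℝ) :
    {p : ℝ × ℝ × ℝ | ∃ θ : ℝ, p = (cos θ, sin θ, c * θ)} = range (helix c) := by
  ext p
  simp only [mem_ofPred_eq, mem_range, helix, eq_comm]

theorem stmt6 :
    LPositiveHelix {p : ℝ × ℝ × ℝ | ∃ θ : ℝ, p = (Real.cos θ, Real.sin θ, θ)} ∧
      ∀ lam : ℝ, 0 < lam → lam < 1 →
        ¬ LPositiveHelix {p : ℝ × ℝ × ℝ | ∃ θ : ℝ, p = (Real.cos θ, Real.sin θ, lam * θ)} := by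
  refine ⟨?_, fun lam hlam hlam_one => ?_⟩
  · have h := (lPositiveHelix_range_helix_iff 1).2 (by norm_num)
    rw [← setOf_exists_eq_helix] at h
    simpa only [one_mul] using h
  · rw [setOf_exists_eq_helix, lPositiveHelix_range_helix_iff, not_le]
    nlinarith
end

section
/- Let E be a nonzero real Banach space, B := E × E*, B* = E* × E**, L(x, x*) = (x*, x̂), L̃(y*, y**) = (y**, ŷ*), q_{L̃}(y*, y**) = ⟨y*, y**⟩. Then for every d* ∈ B*, inf_{d ∈ B} [q_{L̃}(d* − Ld) + (1/2)‖d* − Ld‖²] ≤ 0. -/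
/-!
Given `d* = (y*, y**)` and `ε > 0`, pick `z* ∈ E*` with `‖z*‖ ≤ ‖y**‖` and
`⟨z*, y**⟩ ≥ ‖y**‖² − ε` (possible since `‖y**‖` is a supremum over the unit ball of `E*`).
For `d = (0, y* + z*)` we get `d* − Ld = (−z*, y**)`, so the objective equals
`−⟨z*, y**⟩ + ½(‖z*‖² + ‖y**‖²) ≤ ε`. As `ε` is arbitrary, the infimum is `≤ 0`.
-/

open NormedSpace

theorem Real.iInf_nonpos_of_forall_pos_exists_le {ι : Sort*} {f : ι → ℝ}
    (h : ∀ ε > 0, ∃ i, f i ≤ ε) : ⨅ i, f i ≤ 0 := by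
  by_cases hf : BddBelow (Set.range f)
  · refine le_of_forall_pos_le_add fun ε hε => ?_
    obtain ⟨i, hi⟩ := h ε hε
    calc ⨅ i, f i ≤ f i := ciInf_le hf i
      _ ≤ 0 + ε := by rwa [zero_add]
  · exact (Real.iInf_of_not_bddBelow hf).le

namespace ContinuousLinearMap

variable {F : Type*} [NormedAddCommGroup F] [NormedSpace ℝ F]

theorem exists_norm_le_one_lt_apply (φ : StrongDual ℝ F) {r : ℝ} (hr : r < ‖φ‖) :
    ∃ x : F, ‖x‖ ≤ 1 ∧ r < φ x := by
  obtain ⟨x, hx, hrx⟩ := φ.exists_lt_apply_of_lt_opNorm hr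
  rcases le_or_gt 0 (φ x) with hφx | hφx
  · exact ⟨x, hx.le, by rwa [Real.norm_of_nonneg hφx] at hrx⟩
  · refine ⟨-x, by simpa using hx.le, ?_⟩
    rwa [map_neg, ← Real.norm_of_nonpos hφx.le]

theorem exists_norm_le_sq_norm_sub_le_apply (φ : StrongDual ℝ F) {ε : ℝ} (hε : 0 < ε) :
    ∃ z : F, ‖z‖ ≤ ‖φ‖ ∧ ‖φ‖ ^ 2 - ε ≤ φ z := by
  rcases (norm_nonneg φ).eq_or_lt with hφ | hφ
  · exact ⟨0, by simp [← hφ], by simp [← hφ, hε.le]⟩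
  obtain ⟨x, hx, hφx⟩ := φ.exists_norm_le_one_lt_apply (sub_lt_self ‖φ‖ (div_pos hε hφ))
  refine ⟨‖φ‖ • x, ?_, ?_⟩
  · rw [norm_smul, norm_norm]
    exact mul_le_of_le_one_right hφ.le hx
  · rw [map_smul, smul_eq_mul]
    calc ‖φ‖ ^ 2 - ε = ‖φ‖ * (‖φ‖ - ε / ‖φ‖) := by field_simp
      _ ≤ ‖φ‖ * φ x := by gcongr

end ContinuousLinearMap

theorem stmt8_general (E : Type*) [NormedAddCommGroup E] [NormedSpace ℝ E] :
    -- for every `d* = (y*, y**) ∈ B* = E* × E**`,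
    -- `inf_{d = (x, x*) ∈ B} [q_{L̃}(d* − Ld) + (1/2)‖d* − Ld‖²] ≤ 0`,
    -- where `L(x, x*) = (x*, x̂)`, `d* − Ld = (y* − x*, y** − x̂)`,
    -- `q_{L̃}(y*, y**) = ⟨y*, y**⟩` and `‖(y*, y**)‖² = ‖y*‖² + ‖y**‖²`.
    ∀ (y' : StrongDual ℝ E) (y'' : StrongDual ℝ (StrongDual ℝ E)),
      ⨅ d : E × StrongDual ℝ E,
        ((y'' - inclusionInDoubleDual ℝ E d.1) (y' - d.2) +
          (1 / 2) * (‖y' - d.2‖ ^ 2 + ‖y'' - inclusionInDoubleDual ℝ E d.1‖ ^ 2)) ≤ 0 := by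
  intro y' y''
  refine Real.iInf_nonpos_of_forall_pos_exists_le fun ε hε => ?_
  obtain ⟨z, hz, hy''z⟩ := y''.exists_norm_le_sq_norm_sub_le_apply hε
  refine ⟨(0, y' + z), ?_⟩
  have hsub : y' - (y' + z) = -z := by abel
  have hincl : y'' - inclusionInDoubleDual ℝ E 0 = y'' := by
    rw [map_zero]
    exact sub_zero y''
  have hz_sq : ‖z‖ ^ 2 ≤ ‖y''‖ ^ 2 := pow_le_pow_left₀ (norm_nonneg z) hz 2
  dsimp only
  rw [hincl, hsub, map_neg, norm_neg]
  linarith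

theorem stmt8 (E : Type*) [NormedAddCommGroup E] [NormedSpace ℝ E] [CompleteSpace E]
    [Nontrivial E] :
    -- for every `d* = (y*, y**) ∈ B* = E* × E**`,
    -- `inf_{d = (x, x*) ∈ B} [q_{L̃}(d* − Ld) + (1/2)‖d* − Ld‖²] ≤ 0`,
    -- where `L(x, x*) = (x*, x̂)`, `d* − Ld = (y* − x*, y** − x̂)`,
    -- `q_{L̃}(y*, y**) = ⟨y*, y**⟩` and `‖(y*, y**)‖² = ‖y*‖² + ‖y**‖²`.
    ∀ (y' : StrongDual ℝ E) (y'' : StrongDual ℝ (StrongDual ℝ E)),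
      ⨅ d : E × StrongDual ℝ E,
        ((y'' - inclusionInDoubleDual ℝ E d.1) (y' - d.2) +
          (1 / 2) * (‖y' - d.2‖ ^ 2 + ‖y'' - inclusionInDoubleDual ℝ E d.1‖ ^ 2)) ≤ 0 :=
  stmt8_general E
end
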